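/- arXiv:2503.24103 — 10 statements merged into one kernel-verified Lean document; each statement's English description precedes it below -/
import Mathlib

section
/- For all a, b in 𝔤, the identity S(a,[b,[b,a]]) + S(b,[a,[a,b]]) + S([a,b],[a,b]) + 2⟨a,b⟩·S(a,b) = (1/2)[ad_b,[ad_b,S(a,a)]] + S(S(a,a)(b), b) holds as an equality of linear endomorphisms of 𝔤. (This expresses that the product of S(aa) and S(bb) in the Chayet–Garibaldi algebra equals (1/2)[ad_b,[ad_b,S(aa)]] + S((S(aa)b)·b).) -/
/-- The Chayet–Garibaldi map `S(a,c)` (polarized), as a function of the argument `x`: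
`S(a,c)(x) = (1/2)([a,[c,x]] + [c,[a,x]]) + ⟨a,x⟩c + ⟨c,x⟩a`. -/
noncomputable def cgS {k : Type*} [Field k] {L : Type*} [LieRing L] [LieAlgebra k L]
    (B : L →ₗ[k] L →ₗ[k] k) (a c x : L) : L :=
  (2 : k)⁻¹ • (⁅a, ⁅c, x⁆⁆ + ⁅c, ⁅a, x⁆⁆) + B a x • c + B c x • a

/-- `S(a,[b,[b,a]]) + S(b,[a,[a,b]]) + S([a,b],[a,b]) + 2⟨a,b⟩ S(a,b)
    = (1/2)[ad_b,[ad_b,S(a,a)]] + S(S(a,a)(b), b)` as endomorphisms of 𝔤,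
where `[ad_b,[ad_b,f]](x) = [b,[b,f(x)]] - 2[b, f([b,x])] + f([b,[b,x]])`. -/
theorem stmt1 {k : Type*} [Field k] {L : Type*} [LieRing L] [LieAlgebra k L]
    (hchar : (2 : k) ≠ 0)
    (B : L →ₗ[k] L →ₗ[k] k)
    (hsym : ∀ a b : L, B a b = B b a)
    (hinv : ∀ a b c : L, B ⁅a, b⁆ c = B a ⁅b, c⁆) :
    ∀ a b x : L,
      cgS B a ⁅b, ⁅b, a⁆⁆ x + cgS B b ⁅a, ⁅a, b⁆⁆ x + cgS B ⁅a, b⁆ ⁅a, b⁆ x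
          + (2 * B a b) • cgS B a b x
        = (2 : k)⁻¹ •
            (⁅b, ⁅b, cgS B a a x⁆⁆ - (2 : k) • ⁅b, cgS B a a ⁅b, x⁆⁆
              + cgS B a a ⁅b, ⁅b, x⁆⁆)
          + cgS B (cgS B a a b) b x := by
  intro a b x
  have hinv' : ∀ p q r : L, B p ⁅q, r⁆ = B ⁅p, q⁆ r := fun p q r => (hinv p q r).symm
  have hba : ⁅b, a⁆ = -⁅a, b⁆ := by rw [← lie_skew]
  simp only [cgS, hinv', hba, lie_lie, lie_add, add_lie, lie_sub, sub_lie, lie_neg, neg_lie,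
    lie_smul, smul_lie, lie_self, lie_zero, zero_lie, map_add, map_sub, map_smul, map_neg,
    map_zero, LinearMap.add_apply, LinearMap.sub_apply, LinearMap.smul_apply,
    LinearMap.neg_apply, LinearMap.zero_apply, smul_add, smul_sub, smul_neg, smul_smul,
    neg_smul, neg_neg, smul_eq_mul, zero_add, add_zero, sub_zero, zero_sub, smul_zero,
    mul_zero, zero_mul, zero_smul, one_smul]
  match_scalars <;> field_simp <;> ring
end

section
/- Assume in addition that 𝔤 is finite-dimensional and that ⟨·,·⟩ is non-degenerate. If g : 𝔤 → 𝔤 is a linear map such that S(g(b), b) + (1/2)[ad_b, [ad_b, g]] = 0 (as endomorphisms of 𝔤) for every b ∈ 𝔤, then g = 0. (This is the key step showing that if the Chayet–Garibaldi algebra A(𝔤,κ) is unital then its unit is the identity map, i.e. Id_𝔤 ∈ im S.) -/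
/-- If 𝔤 is finite dimensional, ⟨·,·⟩ is non-degenerate, and `g : 𝔤 → 𝔤` is a linear map with
`S(g(b), b) + (1/2)[ad_b,[ad_b,g]] = 0` for all `b`, then `g = 0`. -/
theorem stmt2 {k : Type*} [Field k] {L : Type*} [LieRing L] [LieAlgebra k L]
    [FiniteDimensional k L]
    (hchar : (2 : k) ≠ 0)
    (B : L →ₗ[k] L →ₗ[k] k)
    (hsym : ∀ a b : L, B a b = B b a)
    (hinv : ∀ a b c : L, B ⁅a, b⁆ c = B a ⁅b, c⁆)
    (hnd : ∀ a : L, (∀ x : L, B a x = 0) → a = 0)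
    (g : L →ₗ[k] L)
    (hg : ∀ b x : L,
      cgS B (g b) b x
        + (2 : k)⁻¹ • (⁅b, ⁅b, g x⁆⁆ - (2 : k) • ⁅b, g ⁅b, x⁆⁆ + g ⁅b, ⁅b, x⁆⁆) = 0) :
    g = 0 := by
  -- Key identity: plug x := b into the hypothesis; all bracket terms cancel.
  have key : ∀ b : L, B (g b) b • b + B b b • g b = 0 := by
    intro b
    have h := hg b b
    have hskew : ⁅b, ⁅g b, b⁆⁆ = -⁅b, ⁅b, g b⁆⁆ := by
      rw [← lie_skew (g b) b, lie_neg]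
    simp only [cgS, lie_self, lie_zero, map_zero, smul_zero, zero_add, sub_zero, add_zero,
      hskew, smul_neg] at h
    linear_combination (norm := module) h
  -- Pairing the key identity with b gives B (g b) b * B b b = 0.
  have key2 : ∀ b : L, B (g b) b * B b b = 0 := by
    intro b
    have h2 := congrArg (fun z => B z b) (key b)
    simp only [map_add, map_smul, LinearMap.add_apply, LinearMap.smul_apply, smul_eq_mul,
      LinearMap.zero_apply, map_zero] at h2
    have h3 : (2 : k) * (B (g b) b * B b b) = 0 := by
      linear_combination h2
    exact (mul_eq_zero.mp h3).resolve_left hchar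
  -- Hence g vanishes on anisotropic vectors.
  have key3 : ∀ b : L, B b b ≠ 0 → g b = 0 := by
    intro b hb
    have h := congrArg (fun z => B b b • z) (key b)
    simp only [smul_add, smul_smul, smul_zero] at h
    rw [mul_comm, key2 b, zero_smul, zero_add] at h
    rcases smul_eq_zero.mp h with h' | h'
    · exact absurd (mul_self_eq_zero.mp h') hb
    · exact h'
  -- Now handle isotropic vectors.
  ext b
  simp only [LinearMap.zero_apply]
  by_cases hb : B b b ≠ 0
  · exact key3 b hb
  push_neg at hb
  by_cases hb0 : b = 0
  · simp [hb0]
  -- find c with B b c ≠ 0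
  have hex : ∃ c : L, B b c ≠ 0 := by
    by_contra hcon
    push_neg at hcon
    exact hb0 (hnd b hcon)
  obtain ⟨c, hc⟩ := hex
  have hbc := hsym c b
  by_cases hcc : B c c = 0
  · -- both b + c and b - c are anisotropic
    have hp : B (b + c) (b + c) ≠ 0 := by
      simp only [map_add, LinearMap.add_apply, hb, hcc, hsym c b]
      intro h
      apply hc
      have : (2 : k) * B b c = 0 := by linear_combination h
      exact (mul_eq_zero.mp this).resolve_left hchar
    have hm : B (b - c) (b - c) ≠ 0 := by
      simp only [map_sub, LinearMap.sub_apply, hb, hcc, hsym c b]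
      intro h
      apply hc
      have : (2 : k) * B b c = 0 := by linear_combination -h
      exact (mul_eq_zero.mp this).resolve_left hchar
    have h1 := key3 _ hp
    have h2 := key3 _ hm
    have : (2 : k) • g b = 0 := by
      rw [map_add] at h1
      rw [map_sub] at h2
      rw [two_smul]
      linear_combination (norm := module) h1 + h2
    rcases smul_eq_zero.mp this with h' | h'
    · exact absurd h' hchar
    · exact h'
  · -- c is anisotropic, so g c = 0; one of b ± c is anisotropic
    have hgc := key3 c hcc
    by_cases hp : B (b + c) (b + c) ≠ 0
    · have h1 := key3 _ hp
      rw [map_add, hgc, add_zero] at h1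
      exact h1
    · push_neg at hp
      have hm : B (b - c) (b - c) ≠ 0 := by
        intro h
        apply hcc
        have hp' : B b b + B c b + (B b c + B c c) = 0 := by
          simpa only [map_add, LinearMap.add_apply] using hp
        have hm' : B b b - B c b - (B b c - B c c) = 0 := by
          simpa only [map_sub, LinearMap.sub_apply] using h
        have : (2 : k) * B c c = 0 := by linear_combination hp' + hm' - 2 * hb
        exact (mul_eq_zero.mp this).resolve_left hchar
      have h2 := key3 _ hm
      rw [map_sub, hgc, sub_zero] at h2
      exact h2
end

section
/- The bracket on the vector space ĝ := (𝔤 ⊗ k[t,t⁻¹]) ⊕ k·𝐤 determined bilinearly by [a⊗t^m, b⊗t^n] = [a,b]⊗t^{m+n} + m⟨a,b⟩δ_{m+n,0}·𝐤 for a,b ∈ 𝔤 and m,n ∈ ℤ, with 𝐤 central, makes ĝ a Lie algebra over k: the bracket is alternating and satisfies the Jacobi identity. -/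
open TensorProduct

namespace AffineAux

noncomputable section

variable (k : Type*) [Field k]

/-- The derivation `t d/dt` on Laurent polynomials. -/
def Dmap : LaurentPolynomial k →ₗ[k] LaurentPolynomial k :=
  (Finsupp.lsum k fun m : ℤ => (m : k) • AddMonoidAlgebra.lsingle m) ∘ₗ
    (AddMonoidAlgebra.coeffLinearEquiv k).toLinearMap

variable {k}

lemma Dmap_single (m : ℤ) (r : k) :
    Dmap k (AddMonoidAlgebra.single m r) = (m : k) • (AddMonoidAlgebra.single m r : LaurentPolynomial k) := by
  rw [Dmap, LinearMap.comp_apply]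
  erw [Finsupp.lsum_single]
  rfl

lemma Dmap_mul (f g : LaurentPolynomial k) :
    Dmap k (f * g) = Dmap k f * g + f * Dmap k g := by
  induction f using AddMonoidAlgebra.induction_linear with
  | zero => simp
  | add f₁ f₂ h₁ h₂ =>
    simp only [add_mul, map_add, h₁, h₂, LinearMap.add_apply]
    abel
  | single m r =>
    induction g using AddMonoidAlgebra.induction_linear with
    | zero => simp
    | add g₁ g₂ h₁ h₂ =>
      simp only [mul_add, map_add, h₁, h₂]
      abel
    | single n s =>
      rw [AddMonoidAlgebra.single_mul_single, Dmap_single, Dmap_single, Dmap_single,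
        smul_mul_assoc, mul_smul_comm, AddMonoidAlgebra.single_mul_single, ← add_smul]
      push_cast
      rfl

/-- Constant coefficient as a linear map. -/
def eps : LaurentPolynomial k →ₗ[k] k :=
  Finsupp.lapply (0 : ℤ) ∘ₗ (AddMonoidAlgebra.coeffLinearEquiv k).toLinearMap

lemma eps_Dmap (f : LaurentPolynomial k) : eps (Dmap k f) = 0 := by
  induction f using AddMonoidAlgebra.induction_linear with
  | zero => simp
  | add f₁ f₂ h₁ h₂ => simp [h₁, h₂]
  | single m r =>
    rw [Dmap_single, map_smul]
    rcases eq_or_ne m 0 with h | h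
    · subst h; simp
    · have : eps (AddMonoidAlgebra.single m r : LaurentPolynomial k) = 0 :=
        Finsupp.single_eq_of_ne h.symm
      rw [this, smul_zero]

/-- Bilinear form `γ f g = ε ((t d/dt f) * g)` on Laurent polynomials. -/
def gam : LaurentPolynomial k →ₗ[k] LaurentPolynomial k →ₗ[k] k :=
  ((LinearMap.mul k (LaurentPolynomial k)).comp (Dmap k)).compr₂ eps

lemma gam_apply (f g : LaurentPolynomial k) : gam f g = eps (Dmap k f * g) := rfl

lemma gam_add_swap (f g : LaurentPolynomial k) : gam f g + gam g f = 0 := by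
  rw [gam_apply, gam_apply, ← map_add, mul_comm (Dmap k g) f, ← Dmap_mul, eps_Dmap]

lemma gam_cyclic (f g h : LaurentPolynomial k) :
    gam f (g * h) + gam g (h * f) + gam h (f * g) = 0 := by
  simp only [gam_apply]
  rw [← map_add, ← map_add, ← eps_Dmap (f * g * h)]
  congr 1
  rw [Dmap_mul, Dmap_mul]
  ring

variable {L : Type*} [LieRing L] [LieAlgebra k L]

lemma br_add_left (x₁ x₂ y : LaurentPolynomial k ⊗[k] L) :
    ⁅x₁ + x₂, y⁆ = ⁅x₁, y⁆ + ⁅x₂, y⁆ := by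
  exact add_lie (L := LaurentPolynomial k ⊗[k] L) (M := LaurentPolynomial k ⊗[k] L) x₁ x₂ y

lemma br_add_right (x y₁ y₂ : LaurentPolynomial k ⊗[k] L) :
    ⁅x, y₁ + y₂⁆ = ⁅x, y₁⁆ + ⁅x, y₂⁆ := by
  exact lie_add (L := LaurentPolynomial k ⊗[k] L) (M := LaurentPolynomial k ⊗[k] L) x y₁ y₂

/-- The Lie bracket on `L ⊗ k[t,t⁻¹]`, transported from the base-change Lie algebra. -/
def m1 : TensorProduct k L (LaurentPolynomial k) →ₗ[k]
    TensorProduct k L (LaurentPolynomial k) →ₗ[k] TensorProduct k L (LaurentPolynomial k) :=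
  LinearMap.mk₂ k
    (fun x y => (TensorProduct.comm k L (LaurentPolynomial k)).symm
      ⁅TensorProduct.comm k L (LaurentPolynomial k) x,
       TensorProduct.comm k L (LaurentPolynomial k) y⁆)
    (fun x₁ x₂ y => by rw [map_add, br_add_left, map_add])
    (fun c x y => by
      set e := TensorProduct.comm k L (LaurentPolynomial k)
      have h : ⁅(c • e x : LaurentPolynomial k ⊗[k] L), e y⁆ = c • ⁅e x, e y⁆ := by
        rw [← algebraMap_smul (LaurentPolynomial k) c (e x),
          ← algebraMap_smul (LaurentPolynomial k) c ⁅e x, e y⁆]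
        exact smul_lie (algebraMap k (LaurentPolynomial k) c) (e x) (e y)
      rw [map_smul, h, map_smul])
    (fun x y₁ y₂ => by rw [map_add, br_add_right, map_add])
    (fun c x y => by
      set e := TensorProduct.comm k L (LaurentPolynomial k)
      have h : ⁅e x, (c • e y : LaurentPolynomial k ⊗[k] L)⁆ = c • ⁅e x, e y⁆ := by
        rw [← algebraMap_smul (LaurentPolynomial k) c (e y),
          ← algebraMap_smul (LaurentPolynomial k) c ⁅e x, e y⁆]
        exact lie_smul (algebraMap k (LaurentPolynomial k) c) (e x) (e y)
      rw [map_smul, h, map_smul])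

lemma m1_tmul (a b : L) (f g : LaurentPolynomial k) :
    m1 (a ⊗ₜ[k] f) (b ⊗ₜ[k] g) = ⁅a, b⁆ ⊗ₜ[k] (f * g) := by
  simp [m1, LinearMap.mk₂_apply]

lemma m1_self (x : TensorProduct k L (LaurentPolynomial k)) : m1 x x = 0 := by
  simp [m1, LinearMap.mk₂_apply]

lemma m1_jacobi (x y z : TensorProduct k L (LaurentPolynomial k)) :
    m1 x (m1 y z) + m1 y (m1 z x) + m1 z (m1 x y) = 0 := by
  simp only [m1, LinearMap.mk₂_apply, LinearEquiv.apply_symm_apply]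
  rw [← map_add, ← map_add, lie_jacobi, map_zero]

variable (B : L →ₗ[k] L →ₗ[k] k)

/-- The 2-cocycle `(a ⊗ f, b ⊗ g) ↦ B a b * γ f g`. -/
def coc : TensorProduct k L (LaurentPolynomial k) →ₗ[k]
    TensorProduct k L (LaurentPolynomial k) →ₗ[k] k :=
  TensorProduct.curry <|
    (TensorProduct.lid k k).toLinearMap ∘ₗ
      TensorProduct.map (TensorProduct.lift B) (TensorProduct.lift gam) ∘ₗ
        (TensorProduct.tensorTensorTensorComm k L (LaurentPolynomial k) L
          (LaurentPolynomial k)).toLinearMap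

lemma coc_tmul (a b : L) (f g : LaurentPolynomial k) :
    coc B (a ⊗ₜ[k] f) (b ⊗ₜ[k] g) = B a b * gam f g := by
  simp [coc, smul_eq_mul]

end

end AffineAux

open AffineAux

/-- The affine Lie algebra bracket on `(𝔤 ⊗ k[t,t⁻¹]) ⊕ k·𝐤`, determined bilinearly by
`[a⊗tᵐ, b⊗tⁿ] = [a,b]⊗t^{m+n} + m⟨a,b⟩δ_{m+n,0}·𝐤` with `𝐤` central, makes it a Lie
algebra: there is a bilinear bracket with these values which is alternating, satisfies
the Jacobi identity, and has `𝐤 = (0,1)` central. -/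
theorem stmt4 {k : Type*} [Field k] {L : Type*} [LieRing L] [LieAlgebra k L]
    (hchar : (2 : k) ≠ 0)
    (B : L →ₗ[k] L →ₗ[k] k)
    (hsym : ∀ a b : L, B a b = B b a)
    (hinv : ∀ a b c : L, B ⁅a, b⁆ c = B a ⁅b, c⁆) :
    ∃ Br : (TensorProduct k L (LaurentPolynomial k) × k) →ₗ[k]
           (TensorProduct k L (LaurentPolynomial k) × k) →ₗ[k]
           (TensorProduct k L (LaurentPolynomial k) × k),
      (∀ x, Br x x = 0) ∧
      (∀ x y z, Br x (Br y z) + Br y (Br z x) + Br z (Br x y) = 0) ∧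
      (∀ y, Br (0, (1 : k)) y = 0) ∧
      (∀ (a b : L) (m n : ℤ),
        Br (a ⊗ₜ[k] LaurentPolynomial.T m, (0 : k))
           (b ⊗ₜ[k] LaurentPolynomial.T n, (0 : k))
          = (⁅a, b⁆ ⊗ₜ[k] LaurentPolynomial.T (m + n),
             if m + n = 0 then (m : k) * B a b else 0)) := by
  classical
  -- antisymmetry of the cocycle
  have hcswap : ∀ x y : TensorProduct k L (LaurentPolynomial k),
      coc B x y + coc B y x = 0 := by
    intro x y
    induction x using TensorProduct.induction_on with
    | zero => simp
    | add x₁ x₂ h₁ h₂ =>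
      simp only [map_add, LinearMap.add_apply] at h₁ h₂ ⊢
      linear_combination h₁ + h₂
    | tmul a f =>
      induction y using TensorProduct.induction_on with
      | zero => simp
      | add y₁ y₂ h₁ h₂ =>
        simp only [map_add, LinearMap.add_apply] at h₁ h₂ ⊢
        linear_combination h₁ + h₂
      | tmul b g =>
        rw [coc_tmul, coc_tmul, hsym b a, ← mul_add, gam_add_swap, mul_zero]
  have hcself : ∀ x : TensorProduct k L (LaurentPolynomial k), coc B x x = 0 := by
    intro x
    have := hcswap x x
    have h2 : (2 : k) * coc B x x = 0 := by linear_combination this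
    exact (mul_eq_zero.mp h2).resolve_left hchar
  -- cocycle identity
  have hccyc : ∀ x y z : TensorProduct k L (LaurentPolynomial k),
      coc B x (m1 y z) + coc B y (m1 z x) + coc B z (m1 x y) = 0 := by
    intro x y z
    induction x using TensorProduct.induction_on with
    | zero => simp
    | add x₁ x₂ h₁ h₂ =>
      simp only [map_add, LinearMap.add_apply, LinearMap.map_add] at h₁ h₂ ⊢
      linear_combination h₁ + h₂
    | tmul a f =>
      induction y using TensorProduct.induction_on with
      | zero => simp
      | add y₁ y₂ h₁ h₂ =>
        simp only [map_add, LinearMap.add_apply, LinearMap.map_add] at h₁ h₂ ⊢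
        linear_combination h₁ + h₂
      | tmul b g =>
        induction z using TensorProduct.induction_on with
        | zero => simp
        | add z₁ z₂ h₁ h₂ =>
          simp only [map_add, LinearMap.add_apply, LinearMap.map_add] at h₁ h₂ ⊢
          linear_combination h₁ + h₂
        | tmul c h =>
          rw [m1_tmul, m1_tmul, m1_tmul, coc_tmul, coc_tmul, coc_tmul]
          have e1 : B b ⁅c, a⁆ = B a ⁅b, c⁆ := by rw [← hinv b c a, hsym]
          have e2 : B c ⁅a, b⁆ = B a ⁅b, c⁆ := by
            rw [hsym c ⁅a, b⁆, hinv a b c]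
          rw [e1, e2, ← mul_add, ← mul_add, gam_cyclic, mul_zero]
  -- assemble the bracket on the direct sum
  refine ⟨LinearMap.mk₂ k
      (fun p q => (m1 p.1 q.1, coc B p.1 q.1))
      (fun p₁ p₂ q => by simp [Prod.ext_iff])
      (fun c p q => by simp [Prod.ext_iff])
      (fun p q₁ q₂ => by simp [Prod.ext_iff])
      (fun c p q => by simp [Prod.ext_iff]), ?_, ?_, ?_, ?_⟩
  · intro x
    simp [LinearMap.mk₂_apply, m1_self, hcself, Prod.ext_iff]
  · intro x y z
    have := m1_jacobi x.1 y.1 z.1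
    have h2 := hccyc x.1 y.1 z.1
    simp only [LinearMap.mk₂_apply, Prod.mk_add_mk, Prod.mk_eq_zero] at *
    exact ⟨this, h2⟩
  · intro y
    simp [LinearMap.mk₂_apply, Prod.ext_iff]
  · intro a b m n
    have hgam : gam (LaurentPolynomial.T m : LaurentPolynomial k)
        (LaurentPolynomial.T n) = (m : k) * (if m + n = 0 then 1 else 0) := by
      have h1 : Dmap k (LaurentPolynomial.T m : LaurentPolynomial k)
          = (m : k) • LaurentPolynomial.T m := Dmap_single m 1
      rw [gam_apply, h1, smul_mul_assoc, map_smul, smul_eq_mul, ← LaurentPolynomial.T_add]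
      congr 1
      exact LaurentPolynomial.T_apply 0 (m + n)
    simp only [LinearMap.mk₂_apply, m1_tmul, coc_tmul, hgam,
      ← LaurentPolynomial.T_add]
    refine Prod.ext rfl ?_
    split_ifs <;> ring
end

section
/- If J is a left ideal of a vertex algebra V, then the subspace J̄ := Σ_{i≥0} 𝒟^(i) J (the span of all 𝒟^(i) x with i ≥ 0 and x ∈ J) is a two-sided ideal of V. -/
/-- A vertex algebra over a field `k` (Borcherds' axioms, stated via the infinitely many
bilinear products `aₙb` and the operators `𝒟⁽ᵐ⁾`). The binomial coefficient `C(m,i)` for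
`m : ℤ` is `Ring.choose m i : ℤ`, viewed in `k` via the canonical ring map `ℤ → k`. -/
structure VertexAlgebra (k : Type*) [Field k] (V : Type*) [AddCommGroup V] [Module k V] where
  /-- the vacuum vector `1` -/
  vac : V
  vac_ne_zero : vac ≠ 0
  /-- the `n`-th product `(a, b) ↦ aₙ b`, bilinear for each `n : ℤ` -/
  mul : ℤ → V →ₗ[k] V →ₗ[k] V
  /-- the operators `𝒟⁽ᵐ⁾` -/
  D : ℤ → V →ₗ[k] V
  /-- truncation: for fixed `a, b`, `aₙb = 0` for all sufficiently large `n` -/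
  trunc : ∀ a b : V, ∃ N : ℤ, ∀ n : ℤ, N ≤ n → mul n a b = 0
  /-- vacuum property: `1ₙ a = δ_{n,-1} a` -/
  vacuum : ∀ (n : ℤ) (a : V), mul n vac a = if n = -1 then a else 0
  /-- 𝒟-derivative formula: `aₙ 1 = 𝒟⁽⁻ⁿ⁻¹⁾ a` -/
  D_deriv : ∀ (n : ℤ) (a : V), mul n a vac = D (-n - 1) a
  /-- skew symmetry: `aₙb = Σ_{i≥0} (-1)^{i+n+1} 𝒟⁽ⁱ⁾(b_{n+i} a)` -/
  skew : ∀ (n : ℤ) (a b : V),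
    mul n a b = ∑ᶠ i : ℕ, ((Int.negOnePow ((i : ℤ) + n + 1) : ℤ) : k) • D (i : ℤ) (mul (n + i) b a)
  /-- iterate formula:
  `(aₘb)ₙc = Σ_{i≥0} (-1)^i C(m,i) (a_{m-i}(b_{n+i}c) - (-1)^m b_{n+m-i}(aᵢc))` -/
  iterate : ∀ (m n : ℤ) (a b c : V),
    mul n (mul m a b) c = ∑ᶠ i : ℕ,
      (((-1 : ℤ) ^ i * Ring.choose m i : ℤ) : k) •
        (mul (m - i) a (mul (n + i) b c)
          - ((Int.negOnePow m : ℤ) : k) • mul (n + m - i) b (mul (i : ℤ) a c))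

namespace VertexAlgebra

variable {k : Type*} [Field k] {V : Type*} [AddCommGroup V] [Module k V]

/-- A subspace `I` is a left ideal if `aₙb ∈ I` for all `a ∈ V`, `b ∈ I`, `n ∈ ℤ`. -/
def IsLeftIdeal (VA : VertexAlgebra k V) (I : Submodule k V) : Prop :=
  ∀ (n : ℤ) (a b : V), b ∈ I → VA.mul n a b ∈ I

/-- A subspace `I` is a right ideal if `aₙb ∈ I` for all `a ∈ I`, `b ∈ V`, `n ∈ ℤ`. -/
def IsRightIdeal (VA : VertexAlgebra k V) (I : Submodule k V) : Prop :=
  ∀ (n : ℤ) (a b : V), a ∈ I → VA.mul n a b ∈ I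

/-- A (two-sided) ideal is a subspace that is both a left and a right ideal. -/
def IsIdeal (VA : VertexAlgebra k V) (I : Submodule k V) : Prop :=
  VA.IsLeftIdeal I ∧ VA.IsRightIdeal I

/-- A grading on a vertex algebra: subspaces `V_(n)` forming an internal direct sum,
with `1 ∈ V_(0)` and `aₙb ∈ V_(l+m-1-n)` for `a ∈ V_(l)`, `b ∈ V_(m)`. -/
structure Grading (VA : VertexAlgebra k V) where
  comp : ℤ → Submodule k V
  isInternal : DirectSum.IsInternal comp
  vac_mem : VA.vac ∈ comp 0
  mul_mem : ∀ (l m n : ℤ) (a b : V), a ∈ comp l → b ∈ comp m →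
    VA.mul n a b ∈ comp (l + m - 1 - n)

/-- A graded vertex algebra has type O if `V_(n) = 0` for `n < 0` and `V_(0) = k·1`. -/
def Grading.TypeO {VA : VertexAlgebra k V} (G : VA.Grading) : Prop :=
  (∀ n : ℤ, n < 0 → G.comp n = ⊥) ∧ G.comp 0 = Submodule.span k {VA.vac}

/-- An ideal `I` is graded if `I = ⊕ₙ (I ∩ V_(n))`. -/
def Grading.IsGraded {VA : VertexAlgebra k V} (G : VA.Grading) (I : Submodule k V) : Prop :=
  I = ⨆ n : ℤ, (I ⊓ G.comp n)

end VertexAlgebra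

private lemma finsum_mem_submodule' {k V : Type*} [Field k] [AddCommGroup V] [Module k V]
    {ι : Sort*} (p : Submodule k V) (f : ι → V) (h : ∀ i, f i ∈ p) : ∑ᶠ i, f i ∈ p := by
  by_cases hf : (Function.support (f ∘ PLift.down)).Finite
  · rw [finsum_eq_sum_plift_of_support_toFinset_subset hf subset_rfl]
    exact Submodule.sum_mem _ fun i _ => h _
  · rw [finsum, dif_neg (show ¬Function.HasFiniteSupport ((fun i => f i) ∘ PLift.down) from hf)]; exact p.zero_mem

/-- If `J` is a left ideal of a vertex algebra `V`, then `J̄ := Σ_{i≥0} 𝒟⁽ⁱ⁾J`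
(the span of all `𝒟⁽ⁱ⁾x` with `i ≥ 0`, `x ∈ J`) is a two-sided ideal of `V`. -/
theorem stmt7 {k : Type*} [Field k] {V : Type*} [AddCommGroup V] [Module k V]
    (hchar : (2 : k) ≠ 0) (VA : VertexAlgebra k V) (J : Submodule k V)
    (hJ : VA.IsLeftIdeal J) :
    VA.IsIdeal (⨆ i : ℕ, J.map (VA.D (i : ℤ))) := by
  set S : Submodule k V := ⨆ i : ℕ, J.map (VA.D (i : ℤ)) with hS
  -- generators are in S
  have auxmem : ∀ (i : ℕ) {x : V}, x ∈ J → VA.D (i : ℤ) x ∈ S := fun i x hx =>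
    Submodule.mem_iSup_of_mem i ⟨x, hx, rfl⟩
  -- D as a product with the vacuum
  have hD : ∀ (j : ℕ) (x : V), VA.D (j : ℤ) x = VA.mul (-(j : ℤ) - 1) x VA.vac := by
    intro j x
    rw [VA.D_deriv]
    congr 1
    ring
  -- step 2: elements of J multiplied on the left land in S
  have step2 : ∀ {x : V}, x ∈ J → ∀ (m : ℤ) (a : V), VA.mul m x a ∈ S := by
    intro x hx m a
    rw [VA.skew m x a]
    exact finsum_mem_submodule' _ _ fun i =>
      Submodule.smul_mem _ _ (auxmem i (hJ _ a x hx))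
  -- step A: D i (D j x) ∈ S for x ∈ J
  have stepA : ∀ (i j : ℕ) {x : V}, x ∈ J → VA.D (i : ℤ) (VA.D (j : ℤ) x) ∈ S := by
    intro i j x hx
    rw [hD j x, hD i (VA.mul (-(j : ℤ) - 1) x VA.vac), ← hD j x, hD j x,
      VA.iterate (-(j : ℤ) - 1) (-(i : ℤ) - 1) x VA.vac VA.vac]
    refine finsum_mem_submodule' _ _ fun l => Submodule.smul_mem _ _ (Submodule.sub_mem _ ?_ ?_)
    · rw [VA.vacuum]
      split_ifs with h
      · have hkey : VA.mul (-(j : ℤ) - 1 - (l : ℤ)) x VA.vac = VA.D (((j + l : ℕ) : ℤ)) x := by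
          rw [VA.D_deriv]
          congr 1
          push_cast
          ring
        rw [hkey]
        exact auxmem _ hx
      · simp only [map_zero]
        exact S.zero_mem
    · refine Submodule.smul_mem _ _ ?_
      rw [VA.vacuum]
      split_ifs with h
      · exfalso; omega
      · exact S.zero_mem
  -- step 1: S is stable under all D i
  have step1 : ∀ (i : ℕ) {y : V}, y ∈ S → VA.D (i : ℤ) y ∈ S := by
    intro i y hy
    refine Submodule.iSup_induction (motive := fun z => VA.D (i : ℤ) z ∈ S) _ hy ?_ ?_ ?_
    · rintro j z ⟨x, hx, rfl⟩
      exact stepA i j hx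
    · simp only [map_zero]
      exact S.zero_mem
    · intro u v hu hv
      rw [map_add]
      exact S.add_mem hu hv
  -- step R: right multiplication by generators
  have stepR : ∀ (j : ℕ) {x : V}, x ∈ J → ∀ (n : ℤ) (b : V),
      VA.mul n (VA.D (j : ℤ) x) b ∈ S := by
    intro j x hx n b
    rw [hD j x, VA.iterate (-(j : ℤ) - 1) n x VA.vac b]
    refine finsum_mem_submodule' _ _ fun l => Submodule.smul_mem _ _ (Submodule.sub_mem _ ?_ ?_)
    · exact step2 hx _ _
    · refine Submodule.smul_mem _ _ ?_
      rw [VA.vacuum]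
      split_ifs with h
      · exact step2 hx _ _
      · exact S.zero_mem
  constructor
  · -- left ideal
    intro n a y hy
    refine Submodule.iSup_induction (motive := fun z => VA.mul n a z ∈ S) _ hy ?_ ?_ ?_
    · rintro j z ⟨x, hx, rfl⟩
      rw [VA.skew n a (VA.D (j : ℤ) x)]
      exact finsum_mem_submodule' _ _ fun i =>
        Submodule.smul_mem _ _ (step1 i (stepR j hx _ a))
    · simp only [map_zero]
      exact S.zero_mem
    · intro u v hu hv
      rw [map_add]
      exact S.add_mem hu hv
  · -- right ideal
    intro n y b hy
    refine Submodule.iSup_induction (motive := fun z => VA.mul n z b ∈ S) _ hy ?_ ?_ ?_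
    · rintro j z ⟨x, hx, rfl⟩
      exact stepR j hx n b
    · simp only [map_zero, LinearMap.zero_apply]
      exact S.zero_mem
    · intro u v hu hv
      rw [map_add, LinearMap.add_apply]
      exact S.add_mem hu hv
end

section
/- In the affine setup, for all a, b ∈ 𝔤: (i) ι(a)_0 (ι(a)_0 (ι(b)_{-1} ι(b))) = 2 ι([a,b])_{-1} ι([a,b]) + ι(b)_{-1} ι([a,[a,b]]) + ι([a,[a,b]])_{-1} ι(b); (ii) ι(a)_{-1} (ι(a)_1 (ι(b)_{-1} ι(b))) = ι(a)_{-1} ι([[a,b],b]) + 2⟨a,b⟩ ι(a)_{-1} ι(b); (iii) ι(a)_1 (ι(a)_1 (ι(b)_{-1} ι(b))) = (2⟨a,b⟩² − ⟨[a,b],[a,b]⟩)·1. -/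
theorem stmt11 {k : Type*} [Field k] {V : Type*} [AddCommGroup V] [Module k V]
    {L : Type*} [LieRing L] [LieAlgebra k L]
    (hchar : (2 : k) ≠ 0)
    (VA : VertexAlgebra k V)
    (B : L →ₗ[k] L →ₗ[k] k)
    (hsym : ∀ a b : L, B a b = B b a)
    (hinv : ∀ a b c : L, B ⁅a, b⁆ c = B a ⁅b, c⁆)
    (ι : L →ₗ[k] V)
    (hcreate : ∀ a : L, VA.mul (-1) (ι a) VA.vac = ι a)
    (hkill : ∀ (a : L) (n : ℤ), 0 ≤ n → VA.mul n (ι a) VA.vac = 0)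
    (hcomm : ∀ (a b : L) (m n : ℤ) (c : V),
      VA.mul m (ι a) (VA.mul n (ι b) c)
        = VA.mul n (ι b) (VA.mul m (ι a) c) + VA.mul (m + n) (ι ⁅a, b⁆) c
          + (if m = -n then (m : k) * B a b else 0) • c) :
    ∀ a b : L,
      VA.mul 0 (ι a) (VA.mul 0 (ι a) (VA.mul (-1) (ι b) (ι b)))
          = (2 : k) • VA.mul (-1) (ι ⁅a, b⁆) (ι ⁅a, b⁆)
            + VA.mul (-1) (ι b) (ι ⁅a, ⁅a, b⁆⁆) + VA.mul (-1) (ι ⁅a, ⁅a, b⁆⁆) (ι b) ∧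
      VA.mul (-1) (ι a) (VA.mul 1 (ι a) (VA.mul (-1) (ι b) (ι b)))
          = VA.mul (-1) (ι a) (ι ⁅⁅a, b⁆, b⁆)
            + (2 * B a b) • VA.mul (-1) (ι a) (ι b) ∧
      VA.mul 1 (ι a) (VA.mul 1 (ι a) (VA.mul (-1) (ι b) (ι b)))
          = (2 * B a b * B a b - B ⁅a, b⁆ ⁅a, b⁆) • VA.vac := by
  intro a b
  have h0 : ∀ x y : L, VA.mul 0 (ι x) (ι y) = ι ⁅x, y⁆ := by
    intro x y
    have h := hcomm x y 0 (-1) VA.vac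
    rw [hcreate y, hkill x 0 le_rfl, map_zero,
      show (0:ℤ) + (-1) = -1 by norm_num, hcreate ⁅x, y⁆] at h
    simpa using h
  have h1 : ∀ x y : L, VA.mul 1 (ι x) (ι y) = (B x y) • VA.vac := by
    intro x y
    have h := hcomm x y 1 (-1) VA.vac
    rw [hcreate y, hkill x 1 zero_le_one, map_zero,
      show (1:ℤ) + (-1) = 0 by norm_num, hkill ⁅x, y⁆ 0 le_rfl] at h
    simpa using h
  have hin2 : VA.mul 1 (ι a) (VA.mul (-1) (ι b) (ι b))
      = ι ⁅⁅a, b⁆, b⁆ + (2 * B a b) • ι b := by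
    have h := hcomm a b 1 (-1) (ι b)
    rw [h1 a b, show (1:ℤ) + (-1) = 0 by norm_num, h0 ⁅a, b⁆ b,
      map_smul, hcreate b] at h
    rw [h, if_pos (by norm_num), two_mul]
    push_cast
    module
  refine ⟨?_, ?_, ?_⟩
  · have hin : VA.mul 0 (ι a) (VA.mul (-1) (ι b) (ι b))
        = VA.mul (-1) (ι b) (ι ⁅a, b⁆) + VA.mul (-1) (ι ⁅a, b⁆) (ι b) := by
      have h := hcomm a b 0 (-1) (ι b)
      rw [h0 a b, show (0:ℤ) + (-1) = -1 by norm_num] at h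
      simpa using h
    rw [hin, map_add]
    have h2 := hcomm a b 0 (-1) (ι ⁅a, b⁆)
    rw [h0 a ⁅a, b⁆, show (0:ℤ) + (-1) = -1 by norm_num,
      if_neg (by norm_num : (0:ℤ) ≠ - -1)] at h2
    have h3 := hcomm a ⁅a, b⁆ 0 (-1) (ι b)
    rw [h0 a b, show (0:ℤ) + (-1) = -1 by norm_num,
      if_neg (by norm_num : (0:ℤ) ≠ - -1)] at h3
    rw [h2, h3, two_smul]
    simp only [zero_smul, add_zero]
    abel
  · rw [hin2, map_add, map_smul]
  · rw [hin2, map_add, map_smul, h1 a ⁅⁅a, b⁆, b⁆, h1 a b]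
    have hB : B a ⁅⁅a, b⁆, b⁆ = - B ⁅a, b⁆ ⁅a, b⁆ := by
      rw [hsym, hinv, show ⁅b, a⁆ = -⁅a, b⁆ from (lie_skew b a).symm, map_neg]
    rw [hB]
    module
end

section
/- In the affine setup, for all a, b ∈ 𝔤: ι(a)_{-1} ι([[a,b],b]) − ι([[a,b],b])_{-1} ι(a) + ι(b)_{-1} ι([a,[a,b]]) − ι([a,[a,b]])_{-1} ι(b) = 0. -/
theorem stmt14 {k : Type*} [Field k] {V : Type*} [AddCommGroup V] [Module k V]
    {L : Type*} [LieRing L] [LieAlgebra k L]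
    (hchar : (2 : k) ≠ 0)
    (VA : VertexAlgebra k V)
    (B : L →ₗ[k] L →ₗ[k] k)
    (hsym : ∀ a b : L, B a b = B b a)
    (hinv : ∀ a b c : L, B ⁅a, b⁆ c = B a ⁅b, c⁆)
    (ι : L →ₗ[k] V)
    (hcreate : ∀ a : L, VA.mul (-1) (ι a) VA.vac = ι a)
    (hkill : ∀ (a : L) (n : ℤ), 0 ≤ n → VA.mul n (ι a) VA.vac = 0)
    (hcomm : ∀ (a b : L) (m n : ℤ) (c : V),
      VA.mul m (ι a) (VA.mul n (ι b) c)
        = VA.mul n (ι b) (VA.mul m (ι a) c) + VA.mul (m + n) (ι ⁅a, b⁆) c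
          + (if m = -n then (m : k) * B a b else 0) • c) :
    ∀ a b : L,
      VA.mul (-1) (ι a) (ι ⁅⁅a, b⁆, b⁆) - VA.mul (-1) (ι ⁅⁅a, b⁆, b⁆) (ι a)
        + VA.mul (-1) (ι b) (ι ⁅a, ⁅a, b⁆⁆) - VA.mul (-1) (ι ⁅a, ⁅a, b⁆⁆) (ι b) = 0 := by
  intro a b
  have key : ∀ x y : L, VA.mul (-1) (ι x) (ι y) - VA.mul (-1) (ι y) (ι x)
      = VA.mul (-2) (ι ⁅x, y⁆) VA.vac := by
    intro x y
    have h := hcomm x y (-1) (-1) VA.vac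
    rw [hcreate x, hcreate y, if_neg (by norm_num), zero_smul, add_zero,
      show (-1 : ℤ) + -1 = -2 by norm_num] at h
    rw [h]; abel
  have hjac : ⁅a, ⁅⁅a, b⁆, b⁆⁆ + ⁅b, ⁅a, ⁅a, b⁆⁆⁆ = (0 : L) := by
    have := lie_jacobi a ⁅a, b⁆ b
    have hz : ⁅⁅a, b⁆, ⁅b, a⁆⁆ = (0 : L) := by
      rw [← lie_skew b a, lie_neg, lie_self, neg_zero]
    rw [hz, add_zero] at this
    exact this
  calc VA.mul (-1) (ι a) (ι ⁅⁅a, b⁆, b⁆) - VA.mul (-1) (ι ⁅⁅a, b⁆, b⁆) (ι a)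
        + VA.mul (-1) (ι b) (ι ⁅a, ⁅a, b⁆⁆) - VA.mul (-1) (ι ⁅a, ⁅a, b⁆⁆) (ι b)
      = VA.mul (-2) (ι ⁅a, ⁅⁅a, b⁆, b⁆⁆) VA.vac
        + VA.mul (-2) (ι ⁅b, ⁅a, ⁅a, b⁆⁆⁆) VA.vac := by
        rw [← key a ⁅⁅a, b⁆, b⁆, ← key b ⁅a, ⁅a, b⁆⁆]; abel
    _ = VA.mul (-2) (ι (⁅a, ⁅⁅a, b⁆, b⁆⁆ + ⁅b, ⁅a, ⁅a, b⁆⁆⁆)) VA.vac := by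
        rw [map_add ι, map_add (VA.mul (-2)), LinearMap.add_apply]
    _ = 0 := by rw [hjac, map_zero]; simp
end

section
/- In the affine setup, for all a, b ∈ 𝔤: (ι(a)_{-1} ι(a))_1 (ι(b)_{-1} ι(b)) = 4⟨a,b⟩ ι(a)_{-1} ι(b) + 2 ι(a)_{-1} ι([[a,b],b]) + ι([a,[a,b]])_{-1} ι(b) + ι(b)_{-1} ι([a,[a,b]]) + 2 ι([a,b])_{-1} ι([a,b]). -/
theorem stmt15 {k : Type*} [Field k] {V : Type*} [AddCommGroup V] [Module k V]
    {L : Type*} [LieRing L] [LieAlgebra k L]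
    (hchar : (2 : k) ≠ 0)
    (VA : VertexAlgebra k V)
    (B : L →ₗ[k] L →ₗ[k] k)
    (hsym : ∀ a b : L, B a b = B b a)
    (hinv : ∀ a b c : L, B ⁅a, b⁆ c = B a ⁅b, c⁆)
    (ι : L →ₗ[k] V)
    (hcreate : ∀ a : L, VA.mul (-1) (ι a) VA.vac = ι a)
    (hkill : ∀ (a : L) (n : ℤ), 0 ≤ n → VA.mul n (ι a) VA.vac = 0)
    (hcomm : ∀ (a b : L) (m n : ℤ) (c : V),
      VA.mul m (ι a) (VA.mul n (ι b) c)
        = VA.mul n (ι b) (VA.mul m (ι a) c) + VA.mul (m + n) (ι ⁅a, b⁆) c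
          + (if m = -n then (m : k) * B a b else 0) • c) :
    ∀ a b : L,
      VA.mul 1 (VA.mul (-1) (ι a) (ι a)) (VA.mul (-1) (ι b) (ι b))
        = (4 * B a b) • VA.mul (-1) (ι a) (ι b)
          + (2 : k) • VA.mul (-1) (ι a) (ι ⁅⁅a, b⁆, b⁆)
          + VA.mul (-1) (ι ⁅a, ⁅a, b⁆⁆) (ι b)
          + VA.mul (-1) (ι b) (ι ⁅a, ⁅a, b⁆⁆)
          + (2 : k) • VA.mul (-1) (ι ⁅a, b⁆) (ι ⁅a, b⁆) := by
  
  intro a b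
  -- products of two generators
  have g0 : ∀ x y : L, VA.mul 0 (ι x) (ι y) = ι ⁅x, y⁆ := by
    intro x y
    conv_lhs => rw [← hcreate y]
    rw [hcomm x y 0 (-1) VA.vac, hkill x 0 le_rfl, map_zero]
    norm_num [hcreate]
  have g1 : ∀ x y : L, VA.mul 1 (ι x) (ι y) = B x y • VA.vac := by
    intro x y
    conv_lhs => rw [← hcreate y]
    rw [hcomm x y 1 (-1) VA.vac, hkill x 1 (by norm_num), map_zero,
      hkill _ (1 + -1) (by norm_num)]
    norm_num
  have g2 : ∀ (x y : L) (n : ℤ), 2 ≤ n → VA.mul n (ι x) (ι y) = 0 := by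
    intro x y n hn
    conv_lhs => rw [← hcreate y]
    rw [hcomm x y n (-1) VA.vac, hkill x n (by linarith), map_zero,
      hkill _ (n + -1) (by linarith), if_neg (by omega)]
    simp
  set x : V := VA.mul (-1) (ι b) (ι b) with hx
  have X0 : VA.mul 0 (ι a) x
      = VA.mul (-1) (ι b) (ι ⁅a, b⁆) + VA.mul (-1) (ι ⁅a, b⁆) (ι b) := by
    rw [hx, hcomm a b 0 (-1) (ι b), g0, if_neg (by omega)]
    norm_num
  have X1 : VA.mul 1 (ι a) x = (2 * B a b) • ι b + ι ⁅⁅a, b⁆, b⁆ := by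
    rw [hx, hcomm a b 1 (-1) (ι b), g1, map_smul, hcreate, if_pos (by norm_num),
      show (1 : ℤ) + -1 = 0 by norm_num, g0]
    push_cast
    module
  have Xn : ∀ n : ℤ, 2 ≤ n → VA.mul n (ι a) x = 0 := by
    intro n hn
    rw [hx, hcomm a b n (-1) (ι b), g2 a b n hn, map_zero, if_neg (by omega), zero_smul,
      add_zero, zero_add]
    rcases eq_or_lt_of_le hn with h2 | h3
    · rw [← h2]
      show VA.mul 1 (ι ⁅a, b⁆) (ι b) = 0
      rw [g1, hinv]
      simp
    · exact g2 _ _ _ (by omega)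
  have Y1 : VA.mul 0 (ι a) (VA.mul (-1) (ι b) (ι ⁅a, b⁆))
      = VA.mul (-1) (ι b) (ι ⁅a, ⁅a, b⁆⁆) + VA.mul (-1) (ι ⁅a, b⁆) (ι ⁅a, b⁆) := by
    rw [hcomm a b 0 (-1) (ι ⁅a, b⁆), g0, if_neg (by omega)]
    norm_num
  have Y2 : VA.mul 0 (ι a) (VA.mul (-1) (ι ⁅a, b⁆) (ι b))
      = VA.mul (-1) (ι ⁅a, b⁆) (ι ⁅a, b⁆) + VA.mul (-1) (ι ⁅a, ⁅a, b⁆⁆) (ι b) := by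
    rw [hcomm a ⁅a, b⁆ 0 (-1) (ι b), g0, if_neg (by omega)]
    norm_num
  rw [VA.iterate (-1) 1 (ι a) (ι a) x]
  have hneg : ((Int.negOnePow (-1) : ℤ) : k) = -1 := by
    rw [Int.negOnePow_odd _ ⟨-1, by ring⟩]; norm_num
  set f : ℕ → V := fun i =>
    (((-1 : ℤ) ^ i * Ring.choose (-1 : ℤ) i : ℤ) : k) •
      (VA.mul ((-1 : ℤ) - i) (ι a) (VA.mul (1 + i) (ι a) x)
        - ((Int.negOnePow (-1) : ℤ) : k) • VA.mul (1 + (-1) - i) (ι a) (VA.mul i (ι a) x))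
    with hf
  have hsupp : Function.support f ⊆ (({0, 1} : Finset ℕ) : Set ℕ) := by
    intro i hi
    by_contra hmem
    simp only [Finset.coe_insert, Finset.coe_singleton, Set.mem_insert_iff,
      Set.mem_singleton_iff, not_or] at hmem
    apply hi
    have h2 : (2 : ℤ) ≤ (i : ℤ) := by omega
    rw [hf]
    dsimp only
    rw [Xn (1 + i) (by omega), Xn i h2, map_zero, map_zero, smul_zero, sub_zero, smul_zero]
  rw [finsum_eq_finset_sum_of_support_subset f hsupp]
  rw [show ({0, 1} : Finset ℕ) = insert 0 {1} from rfl, Finset.sum_insert (by decide),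
    Finset.sum_singleton]
  rw [hf]
  dsimp only
  have c0 : (((-1 : ℤ) ^ (0 : ℕ) * Ring.choose (-1 : ℤ) (0 : ℕ) : ℤ) : k) = 1 := by
    rw [pow_zero, Ring.choose_zero_right, one_mul, Int.cast_one]
  have c1 : (((-1 : ℤ) ^ (1 : ℕ) * Ring.choose (-1 : ℤ) (1 : ℕ) : ℤ) : k) = 1 := by
    rw [pow_one, Ring.choose_one_right]
    norm_num
  rw [c0, c1, one_smul, one_smul, hneg, Nat.cast_zero, Nat.cast_one]
  rw [show (-1 : ℤ) - 0 = -1 by norm_num, show (1 : ℤ) + 0 = 1 by norm_num,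
    show (1 : ℤ) + -1 - 0 = 0 by norm_num, show (-1 : ℤ) - 1 = -2 by norm_num,
    show (1 : ℤ) + 1 = 2 by norm_num, show (1 : ℤ) + -1 - 1 = -1 by norm_num]
  rw [X1, X0, Xn 2 le_rfl, map_zero, map_add (VA.mul 0 (ι a)), Y1, Y2, map_add, map_smul]
  module
end

section
/- In the affine setup, for all a, b ∈ 𝔤: (ι(a)_{-1} ι(a))_1 (ι(b)_{-1} ι(b)) + (ι(b)_{-1} ι(b))_1 (ι(a)_{-1} ι(a)) = 4⟨a,b⟩ (ι(a)_{-1} ι(b) + ι(b)_{-1} ι(a)) + 4 ι([a,b])_{-1} ι([a,b]) + 2 (ι(a)_{-1} ι([[a,b],b]) + ι([[a,b],b])_{-1} ι(a) + ι(b)_{-1} ι([a,[a,b]]) + ι([a,[a,b]])_{-1} ι(b)). (This identity shows that the map sending the symmetric square element 4ab to ι(a)_{-1}ι(b) + ι(b)_{-1}ι(a) intertwines the Chayet–Garibaldi product ∗ with the Jordan product d•e = (1/2)(d_1 e + e_1 d).) -/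
theorem stmt16 {k : Type*} [Field k] {V : Type*} [AddCommGroup V] [Module k V]
    {L : Type*} [LieRing L] [LieAlgebra k L]
    (hchar : (2 : k) ≠ 0)
    (VA : VertexAlgebra k V)
    (B : L →ₗ[k] L →ₗ[k] k)
    (hsym : ∀ a b : L, B a b = B b a)
    (hinv : ∀ a b c : L, B ⁅a, b⁆ c = B a ⁅b, c⁆)
    (ι : L →ₗ[k] V)
    (hcreate : ∀ a : L, VA.mul (-1) (ι a) VA.vac = ι a)
    (hkill : ∀ (a : L) (n : ℤ), 0 ≤ n → VA.mul n (ι a) VA.vac = 0)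
    (hcomm : ∀ (a b : L) (m n : ℤ) (c : V),
      VA.mul m (ι a) (VA.mul n (ι b) c)
        = VA.mul n (ι b) (VA.mul m (ι a) c) + VA.mul (m + n) (ι ⁅a, b⁆) c
          + (if m = -n then (m : k) * B a b else 0) • c) :
    ∀ a b : L,
      VA.mul 1 (VA.mul (-1) (ι a) (ι a)) (VA.mul (-1) (ι b) (ι b))
          + VA.mul 1 (VA.mul (-1) (ι b) (ι b)) (VA.mul (-1) (ι a) (ι a))
        = (4 * B a b) • (VA.mul (-1) (ι a) (ι b) + VA.mul (-1) (ι b) (ι a))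
          + (4 : k) • VA.mul (-1) (ι ⁅a, b⁆) (ι ⁅a, b⁆)
          + (2 : k) • (VA.mul (-1) (ι a) (ι ⁅⁅a, b⁆, b⁆)
            + VA.mul (-1) (ι ⁅⁅a, b⁆, b⁆) (ι a)
            + VA.mul (-1) (ι b) (ι ⁅a, ⁅a, b⁆⁆)
            + VA.mul (-1) (ι ⁅a, ⁅a, b⁆⁆) (ι b)) := by
  
  intro a b
  -- products of two generators
  have hmul0 : ∀ x y : L, VA.mul 0 (ι x) (ι y) = ι ⁅x, y⁆ := by
    intro x y
    conv_lhs => rw [← hcreate y]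
    rw [hcomm x y 0 (-1) VA.vac]
    rw [hkill x 0 le_rfl]
    norm_num [hcreate]
  have hmul1 : ∀ x y : L, VA.mul 1 (ι x) (ι y) = B x y • VA.vac := by
    intro x y
    conv_lhs => rw [← hcreate y]
    rw [hcomm x y 1 (-1) VA.vac]
    rw [hkill x 1 (by norm_num)]
    norm_num [hkill _ 0 le_rfl]
  have hmul2 : ∀ (x y : L) (n : ℤ), 2 ≤ n → VA.mul n (ι x) (ι y) = 0 := by
    intro x y n hn
    conv_lhs => rw [← hcreate y]
    rw [hcomm x y n (-1) VA.vac]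
    rw [hkill x n (by linarith), hkill ⁅x, y⁆ (n + -1) (by linarith), map_zero,
      if_neg (show ¬ n = -(-1) by omega)]
    simp only [zero_smul, add_zero, zero_add]
  -- products with y₋₁y
  have hc1 : ∀ x y : L, VA.mul 1 (ι x) (VA.mul (-1) (ι y) (ι y))
      = (2 * B x y) • ι y + ι ⁅⁅x, y⁆, y⁆ := by
    intro x y
    rw [hcomm x y 1 (-1) (ι y), hmul1, show (1:ℤ) + -1 = 0 from by norm_num, hmul0,
      map_smul, hcreate, if_pos (show (1:ℤ) = -(-1) from by norm_num)]
    push_cast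
    module
  have hc2 : ∀ (x y : L) (n : ℤ), 2 ≤ n →
      VA.mul n (ι x) (VA.mul (-1) (ι y) (ι y)) = 0 := by
    intro x y n hn
    rw [hcomm x y n (-1) (ι y), hmul2 x y n hn, map_zero]
    have hif : ¬ (n = -(-1)) := by omega
    rcases eq_or_lt_of_le hn with h | h
    · subst h
      norm_num [hmul1]
      rw [hinv, lie_self, map_zero]
      simp
    · rw [hmul2 ⁅x, y⁆ y (n + -1) (by omega), if_neg hif, zero_smul]
      simp
  have hc0 : ∀ x y : L, VA.mul 0 (ι x) (VA.mul (-1) (ι y) (ι y))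
      = VA.mul (-1) (ι y) (ι ⁅x, y⁆) + VA.mul (-1) (ι ⁅x, y⁆) (ι y) := by
    intro x y
    rw [hcomm x y 0 (-1) (ι y), hmul0]
    norm_num
  have hc00 : ∀ x y : L, VA.mul 0 (ι x) (VA.mul 0 (ι x) (VA.mul (-1) (ι y) (ι y)))
      = VA.mul (-1) (ι y) (ι ⁅x, ⁅x, y⁆⁆)
        + (2 : k) • VA.mul (-1) (ι ⁅x, y⁆) (ι ⁅x, y⁆)
        + VA.mul (-1) (ι ⁅x, ⁅x, y⁆⁆) (ι y) := by
    intro x y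
    rw [hc0, map_add, hcomm x y 0 (-1) (ι ⁅x, y⁆), hcomm x ⁅x, y⁆ 0 (-1) (ι y),
      hmul0, hmul0]
    norm_num
    module
  -- evaluating the iterate formula
  have hiter : ∀ (x : L) (c : V), (∀ n : ℤ, 2 ≤ n → VA.mul n (ι x) c = 0) →
      VA.mul 1 (VA.mul (-1) (ι x) (ι x)) c
        = (2 : k) • VA.mul (-1) (ι x) (VA.mul 1 (ι x) c)
          + VA.mul 0 (ι x) (VA.mul 0 (ι x) c) := by
    intro x c h2
    rw [VA.iterate (-1) 1 (ι x) (ι x) c]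
    rw [finsum_eq_finset_sum_of_support_subset _
      (s := (Finset.range 2 : Finset ℕ)) ?hsupp]
    case hsupp =>
      intro i hi
      simp only [Function.mem_support] at hi
      by_contra hir
      apply hi
      simp only [Finset.coe_range, Set.mem_Iio] at hir
      push_neg at hir
      have h1 : VA.mul (1 + (i : ℤ)) (ι x) c = 0 := h2 _ (by omega)
      have h2' : VA.mul (i : ℤ) (ι x) c = 0 := h2 _ (by omega)
      rw [h1, h2', map_zero, map_zero, smul_zero, sub_zero, smul_zero]
    rw [Finset.sum_range_succ, Finset.sum_range_succ, Finset.sum_range_zero, zero_add]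
    have e0 : ((0 : ℕ) : ℤ) = 0 := rfl
    have e1 : ((1 : ℕ) : ℤ) = 1 := rfl
    rw [e0, e1]
    have hch0 : Ring.choose (-1 : ℤ) 0 = 1 := Ring.choose_zero_right _
    have hch1 : Ring.choose (-1 : ℤ) 1 = -1 := Ring.choose_one_right _
    have hneg : ((Int.negOnePow (-1) : ℤ) : k) = -1 := by
      rw [Int.negOnePow_neg, Int.negOnePow_one]
      norm_num
    rw [hch0, hch1, hneg]
    rw [h2 (1 + 1) (by norm_num), map_zero]
    norm_num
    module
  -- swapping order of a (-1)-product
  have hswap : ∀ x y : L, VA.mul (-1) (ι x) (ι y)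
      = VA.mul (-1) (ι y) (ι x) + VA.mul (-2) (ι ⁅x, y⁆) VA.vac := by
    intro x y
    conv_lhs => rw [← hcreate y]
    rw [hcomm x y (-1) (-1) VA.vac, hcreate x]
    norm_num
  -- the key computation
  have key : ∀ x y : L, VA.mul 1 (VA.mul (-1) (ι x) (ι x)) (VA.mul (-1) (ι y) (ι y))
      = (4 * B x y) • VA.mul (-1) (ι x) (ι y)
        + (2 : k) • VA.mul (-1) (ι x) (ι ⁅⁅x, y⁆, y⁆)
        + VA.mul (-1) (ι y) (ι ⁅x, ⁅x, y⁆⁆)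
        + (2 : k) • VA.mul (-1) (ι ⁅x, y⁆) (ι ⁅x, y⁆)
        + VA.mul (-1) (ι ⁅x, ⁅x, y⁆⁆) (ι y) := by
    intro x y
    rw [hiter x _ (fun n hn => hc2 x y n hn), hc1, hc00, map_add, map_smul]
    module
  rw [key a b, key b a]
  have hba : ⁅b, a⁆ = -⁅a, b⁆ := (lie_skew b a).symm
  have l1 : ⁅⁅b, a⁆, a⁆ = ⁅a, ⁅a, b⁆⁆ := by
    rw [hba, neg_lie]; exact lie_skew a ⁅a, b⁆
  have l2 : ⁅b, ⁅b, a⁆⁆ = ⁅⁅a, b⁆, b⁆ := by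
    rw [hba, lie_neg]; exact lie_skew ⁅a, b⁆ b
  have l3 : VA.mul (-1) (ι ⁅b, a⁆) (ι ⁅b, a⁆) = VA.mul (-1) (ι ⁅a, b⁆) (ι ⁅a, b⁆) := by
    rw [hba, map_neg, map_neg, map_neg]
    simp
  rw [l1, l2, l3, hsym b a]
  rw [hswap a ⁅⁅a, b⁆, b⁆, hswap b ⁅a, ⁅a, b⁆⁆]
  have hjac : ⁅a, ⁅⁅a, b⁆, b⁆⁆ = -⁅b, ⁅a, ⁅a, b⁆⁆⁆ := by
    rw [leibniz_lie a ⁅a, b⁆ b, lie_self, add_zero]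
    exact (lie_skew ⁅a, ⁅a, b⁆⁆ b).symm
  have hcancel : VA.mul (-2) (ι ⁅a, ⁅⁅a, b⁆, b⁆⁆) VA.vac
      = - VA.mul (-2) (ι ⁅b, ⁅a, ⁅a, b⁆⁆⁆) VA.vac := by
    rw [hjac, map_neg, map_neg]
    simp
  rw [hcancel]
  module
end

section
/- In the affine setup, for all a, b ∈ 𝔤: (ι(a)_{-1} ι(a))_3 (ι(b)_{-1} ι(b)) = (2⟨a,b⟩² + ⟨b, [a,[a,b]]⟩)·1. (This identity shows that the bilinear form (d,e) ↦ d_3 e on the symmetric degree-two part corresponds to the Chayet–Garibaldi form τ(S(aa),S(bb)) = (1/2)⟨S(aa)b, b⟩, up to the scaling factor 4.) -/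
theorem stmt17 {k : Type*} [Field k] {V : Type*} [AddCommGroup V] [Module k V]
    {L : Type*} [LieRing L] [LieAlgebra k L]
    (hchar : (2 : k) ≠ 0)
    (VA : VertexAlgebra k V)
    (B : L →ₗ[k] L →ₗ[k] k)
    (hsym : ∀ a b : L, B a b = B b a)
    (hinv : ∀ a b c : L, B ⁅a, b⁆ c = B a ⁅b, c⁆)
    (ι : L →ₗ[k] V)
    (hcreate : ∀ a : L, VA.mul (-1) (ι a) VA.vac = ι a)
    (hkill : ∀ (a : L) (n : ℤ), 0 ≤ n → VA.mul n (ι a) VA.vac = 0)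
    (hcomm : ∀ (a b : L) (m n : ℤ) (c : V),
      VA.mul m (ι a) (VA.mul n (ι b) c)
        = VA.mul n (ι b) (VA.mul m (ι a) c) + VA.mul (m + n) (ι ⁅a, b⁆) c
          + (if m = -n then (m : k) * B a b else 0) • c) :
    ∀ a b : L,
      VA.mul 3 (VA.mul (-1) (ι a) (ι a)) (VA.mul (-1) (ι b) (ι b))
        = (2 * B a b * B a b + B b ⁅a, ⁅a, b⁆⁆) • VA.vac := by
  intro a b
  -- products of generators
  have hab0 : ∀ x y : L, VA.mul 0 (ι x) (ι y) = ι ⁅x, y⁆ := by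
    intro x y
    conv_lhs => rw [← hcreate y]
    rw [hcomm x y 0 (-1) VA.vac, hkill x 0 le_rfl]
    norm_num [hcreate]
  have hab1 : ∀ x y : L, VA.mul 1 (ι x) (ι y) = B x y • VA.vac := by
    intro x y
    conv_lhs => rw [← hcreate y]
    rw [hcomm x y 1 (-1) VA.vac, hkill x 1 (by norm_num), show (1 : ℤ) + -1 = 0 by norm_num,
      hkill ⁅x, y⁆ 0 le_rfl]
    norm_num
  have hab2 : ∀ (x y : L) (m : ℤ), 2 ≤ m → VA.mul m (ι x) (ι y) = 0 := by
    intro x y m hm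
    conv_lhs => rw [← hcreate y]
    rw [hcomm x y m (-1) VA.vac, hkill x m (by omega), hkill ⁅x, y⁆ (m + -1) (by omega)]
    simp [show ¬ m = -(-1) by omega, show ¬ m = 1 by omega]
  set c : V := VA.mul (-1) (ι b) (ι b) with hc
  have hc0 : VA.mul 0 (ι a) c = VA.mul (-1) (ι b) (ι ⁅a, b⁆) + VA.mul (-1) (ι ⁅a, b⁆) (ι b) := by
    rw [hc, hcomm a b 0 (-1) (ι b), hab0 a b]
    norm_num
  have hc1 : VA.mul 1 (ι a) c = (2 * B a b) • ι b + ι ⁅⁅a, b⁆, b⁆ := by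
    rw [hc, hcomm a b 1 (-1) (ι b), hab1 a b, map_smul, hcreate b,
      show (1 : ℤ) + -1 = 0 by norm_num, hab0, if_pos (show (1 : ℤ) = - -1 by norm_num)]
    push_cast
    rw [one_mul, two_mul, add_smul]
    abel
  have hc2 : VA.mul 2 (ι a) c = B ⁅a, b⁆ b • VA.vac := by
    rw [hc, hcomm a b 2 (-1) (ι b), hab2 a b 2 le_rfl]
    norm_num [hab1]
  have hc3 : ∀ m : ℤ, 3 ≤ m → VA.mul m (ι a) c = 0 := by
    intro m hm
    rw [hc, hcomm a b m (-1) (ι b), hab2 a b m (by omega), hab2 ⁅a, b⁆ b (m + -1) (by omega)]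
    simp [show ¬ m = -(-1) by omega, show ¬ m = 1 by omega]
  have t0 : VA.mul 2 (ι a) (VA.mul 0 (ι a) c)
      = (B ⁅a, b⁆ ⁅a, b⁆ + B ⁅a, ⁅a, b⁆⁆ b) • VA.vac := by
    rw [hc0, map_add, hcomm a b 2 (-1) (ι ⁅a, b⁆), hcomm a ⁅a, b⁆ 2 (-1) (ι b),
      hab2 a ⁅a, b⁆ 2 le_rfl, hab2 a b 2 le_rfl]
    norm_num [hab1, add_smul]
  have t1 : VA.mul 1 (ι a) (VA.mul 1 (ι a) c)
      = (2 * B a b * B a b + B a ⁅⁅a, b⁆, b⁆) • VA.vac := by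
    rw [hc1, map_add, map_smul, hab1 a b, hab1 a ⁅⁅a, b⁆, b⁆, smul_smul, add_smul]
  have t2 : VA.mul 0 (ι a) (VA.mul 2 (ι a) c) = 0 := by
    rw [hc2, map_smul, hkill a 0 le_rfl, smul_zero]
  have hch2 : Ring.choose (-1 : ℤ) 2 = 1 := by
    have h := Ring.descPochhammer_eq_factorial_smul_choose (-1 : ℤ) 2
    simp [descPochhammer_succ_right, Polynomial.smeval_mul, Polynomial.smeval_sub,
      Polynomial.smeval_X, Polynomial.smeval_one, Nat.factorial] at h
    omega
  have hneg : ((Int.negOnePow (-1) : ℤ) : k) = -1 := by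
    norm_num [show ((Int.negOnePow (-1) : ℤ)) = -1 from by decide]
  rw [VA.iterate (-1) 3 (ι a) (ι a) c]
  rw [finsum_eq_sum_of_support_subset _ (s := Finset.range 3)
    (Function.support_subset_iff'.2 ?_)]
  · rw [Finset.sum_range_succ, Finset.sum_range_succ, Finset.sum_range_one]
    rw [hneg]
    have e0 : VA.mul (3 + (0 : ℕ)) (ι a) c = 0 := hc3 _ (by norm_num)
    have e1 : VA.mul (3 + (1 : ℕ)) (ι a) c = 0 := hc3 _ (by norm_num)
    have e2 : VA.mul (3 + (2 : ℕ)) (ι a) c = 0 := hc3 _ (by norm_num)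
    rw [e0, e1, e2]
    have c0 : (((-1 : ℤ) ^ (0:ℕ) * Ring.choose (-1 : ℤ) 0 : ℤ) : k) = 1 := by
      simp [Ring.choose_zero_right]
    have c1 : (((-1 : ℤ) ^ (1:ℕ) * Ring.choose (-1 : ℤ) 1 : ℤ) : k) = 1 := by
      simp [Ring.choose_one_right]
    have c2 : (((-1 : ℤ) ^ (2:ℕ) * Ring.choose (-1 : ℤ) 2 : ℤ) : k) = 1 := by
      simp [hch2]
    rw [c0, c1, c2]
    simp only [map_zero, zero_sub, Nat.cast_zero, Nat.cast_one, Nat.cast_ofNat, one_smul,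
      neg_smul, neg_neg, one_smul]
    norm_num
    have key1 : B ⁅a, b⁆ ⁅a, b⁆ = - B a ⁅⁅a, b⁆, b⁆ := by
      rw [hinv a b ⁅a, b⁆, ← lie_skew ⁅a, b⁆ b, map_neg, neg_neg]
    have key2 : B ⁅a, ⁅a, b⁆⁆ b = B b ⁅a, ⁅a, b⁆⁆ := hsym _ _
    rw [t0, t1, t2, add_zero, ← add_smul, key1, key2]
    congr 1
    ring
  · intro i hi
    simp only [Finset.coe_range, Set.mem_Iio, not_lt] at hi
    have h1 : VA.mul (3 + (i : ℤ)) (ι a) c = 0 := hc3 _ (by omega)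
    have h2 : VA.mul (i : ℤ) (ι a) c = 0 := hc3 _ (by exact_mod_cast Nat.cast_le.mpr hi)
    rw [h1, h2]
    simp
end

section
/- Let V be a graded vertex algebra of type O. Then for all a, b ∈ V_(2): a_1 b − (1/2) 𝒟^(1)(a_2 b) = (1/2)(a_1 b + b_1 a); i.e., Borcherds' product a ×₀ b = Σ_{i≥0} ((−1)^i/(i+1)) 𝒟^(i)(a_{i+1} b), restricted to degree-two elements, coincides with the Jordan product (1/2)(a_1 b + b_1 a). -/
section Aux

variable {k : Type*} [Field k] {V : Type*} [AddCommGroup V] [Module k V] (VA : VertexAlgebra k V)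

/-- For `n ≥ 0`, `aₙ 1 = 0`. -/
lemma aux_mul_vac (n : ℤ) (hn : 0 ≤ n) (a : V) : VA.mul n a VA.vac = 0 := by
  rw [VA.skew n a VA.vac]
  have hz : ∀ i : ℕ,
      ((Int.negOnePow ((i : ℤ) + n + 1) : ℤ) : k) • VA.D (i : ℤ) (VA.mul (n + i) VA.vac a) = 0 := by
    intro i
    rw [VA.vacuum, if_neg (by omega), map_zero, smul_zero]
  simp only [hz, finsum_zero]

/-- `𝒟⁽ᵐ⁾ = 0` for `m < 0`. -/
lemma aux_D_neg (m : ℤ) (hm : m < 0) (a : V) : VA.D m a = 0 := by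
  have h := VA.D_deriv (-m - 1) a
  rw [show -(-m - 1) - 1 = m by ring] at h
  rw [← h, aux_mul_vac VA _ (by omega)]

/-- `𝒟⁽⁰⁾ ∘ 𝒟⁽⁰⁾ = id`. -/
lemma aux_D0D0 (a : V) : VA.D 0 (VA.D 0 a) = a := by
  have h := VA.skew (-1) VA.vac a
  rw [VA.vacuum (-1) a, if_pos rfl] at h
  rw [finsum_eq_single _ 0 (fun i hi => ?_)] at h
  · have hd := VA.D_deriv (-1) a
    norm_num at hd h
    rw [hd] at h
    exact h.symm
  · rw [VA.D_deriv (-1 + (i : ℤ)) a, aux_D_neg VA (-(-1 + (i : ℤ)) - 1) (by omega),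
      map_zero, smul_zero]

/-- `𝒟⁽⁰⁾` is idempotent. -/
lemma aux_D0_idem (a : V) : VA.D 0 (VA.D 0 a) = VA.D 0 a := by
  have hd : ∀ x : V, VA.mul (-1) x VA.vac = VA.D 0 x := by
    intro x; have := VA.D_deriv (-1) x; norm_num at this; exact this
  have h := VA.iterate (-1) (-1) a VA.vac VA.vac
  rw [hd, hd] at h
  rw [finsum_eq_single _ 0 (fun i hi => ?_)] at h
  · rw [h]
    rw [show ((-1 : ℤ) + (0 : ℕ) = -1) by norm_num, VA.vacuum (-1) VA.vac, if_pos rfl]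
    rw [show ((-1 : ℤ) + -1 - (0 : ℕ) = -2) by norm_num, VA.vacuum (-2), if_neg (by omega)]
    rw [show ((-1 : ℤ) - (0 : ℕ) = -1) by norm_num, hd]
    simp [Ring.choose_zero_right]
  · rw [VA.vacuum (-1 + (i : ℤ)), if_neg (by omega), map_zero,
      VA.vacuum (-1 + -1 - (i : ℤ)), if_neg (by omega), smul_zero, zero_sub, neg_zero, smul_zero]

/-- `𝒟⁽⁰⁾ = id`. -/
lemma aux_D0 (a : V) : VA.D 0 a = a := by
  conv_rhs => rw [← aux_D0D0 VA a, aux_D0_idem VA a]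

end Aux

/-- In a graded vertex algebra of type O, for `a, b ∈ V_(2)`:
`a₁b − (1/2)𝒟⁽¹⁾(a₂b) = (1/2)(a₁b + b₁a)`, i.e. Borcherds' product `×₀` restricted to
degree-two elements coincides with the Jordan product. -/
theorem stmt18 {k : Type*} [Field k] {V : Type*} [AddCommGroup V] [Module k V]
    (hchar : (2 : k) ≠ 0) (VA : VertexAlgebra k V) (G : VA.Grading) (hO : G.TypeO) :
    ∀ a b : V, a ∈ G.comp 2 → b ∈ G.comp 2 →
      VA.mul 1 a b - (2 : k)⁻¹ • VA.D 1 (VA.mul 2 a b)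
        = (2 : k)⁻¹ • (VA.mul 1 a b + VA.mul 1 b a) := by
  intro a b ha hb
  -- degree of products
  have hmul : ∀ n : ℤ, VA.mul n a b ∈ G.comp (3 - n) := by
    intro n
    have h := G.mul_mem 2 2 n a b ha hb
    rwa [show (2 + 2 - 1 - n : ℤ) = 3 - n by ring] at h
  have hzero : ∀ n : ℤ, 4 ≤ n → VA.mul n a b = 0 := by
    intro n hn
    have h := hmul n
    rw [hO.1 (3 - n) (by omega), Submodule.mem_bot] at h
    exact h
  have h3 : ∃ c : k, c • VA.vac = VA.mul 3 a b := by
    have h := hmul 3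
    norm_num [hO.2, Submodule.mem_span_singleton] at h
    exact h
  have hD2vac : VA.D 2 VA.vac = 0 := by
    have h := VA.D_deriv (-3) VA.vac
    rw [VA.vacuum (-3), if_neg (by omega)] at h
    rw [show -(-3 : ℤ) - 1 = 2 by ring] at h
    exact h.symm
  -- skew symmetry identity: b₁a = a₁b - 𝒟⁽¹⁾(a₂b)
  have hba : VA.mul 1 b a = VA.mul 1 a b - VA.D 1 (VA.mul 2 a b) := by
    have hskew := VA.skew 1 b a
    rw [finsum_eq_finset_sum_of_support_subset _ (s := {0, 1}) ?_] at hskew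
    · rw [Finset.sum_pair (by norm_num : (0 : ℕ) ≠ 1)] at hskew
      rw [hskew]
      have e0 : ((Int.negOnePow (((0 : ℕ) : ℤ) + 1 + 1) : ℤ) : k) = 1 := by
        rw [show (((0 : ℕ) : ℤ) + 1 + 1) = 2 by norm_num,
          show ((Int.negOnePow 2 : ℤ)) = 1 from by decide]
        norm_num
      have e1 : ((Int.negOnePow (((1 : ℕ) : ℤ) + 1 + 1) : ℤ) : k) = -1 := by
        rw [show (((1 : ℕ) : ℤ) + 1 + 1) = 3 by norm_num,
          show ((Int.negOnePow 3 : ℤ)) = -1 from by decide]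
        norm_num
      rw [e0, e1]
      rw [show ((1 : ℤ) + ((0 : ℕ) : ℤ) = 1) by norm_num,
        show ((1 : ℤ) + ((1 : ℕ) : ℤ) = 2) by norm_num,
        show (((0 : ℕ) : ℤ) = 0) by norm_num, show (((1 : ℕ) : ℤ) = 1) by norm_num]
      rw [aux_D0]
      module
    · intro i hi
      simp only [Finset.coe_insert, Finset.coe_singleton, Set.mem_insert_iff,
        Set.mem_singleton_iff]
      by_contra hcon
      push_neg at hcon
      apply hi
      beta_reduce
      rcases Nat.lt_or_ge i 3 with hlt | hge
      · have hi2 : i = 2 := by omega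
        subst hi2
        obtain ⟨c, hc⟩ := h3
        rw [show ((1 : ℤ) + ((2 : ℕ) : ℤ) = 3) by norm_num, ← hc, map_smul, show (((2 : ℕ) : ℤ)) = (2 : ℤ) by norm_num, hD2vac,
          smul_zero, smul_zero]
      · rw [hzero (1 + i) (by omega), map_zero, smul_zero]
  rw [hba]
  match_scalars <;> field_simp <;> norm_num
end
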